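/- For every n ≥ 1, the expected total number E_n of branches (the sum over all r ≥ 0 of the number of r-branches) in a uniformly random binary tree of size n is given exactly by E_n = ((n+1)/binom(2n,n)) · Σ_{k=1}^{n+1} (2 - 2^{-v₂(k)}) · k · [ binom(2n, n+1-k) - 2·binom(2n, n-k) + binom(2n, n-1-k) ], where v₂(k) is the 2-adic valuation of k, i.e., the largest ν such that 2^ν divides k. -/

import Mathlib

/-- A binary tree is either a leaf `□` or an internal node with two subtrees. -/
inductive BTree : Type
  | leaf : BTree
  | node : BTree → BTree → BTree
deriving DecidableEq

namespace BTree

/-- The size of a binary tree: its number of internal nodes. -/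
def size : BTree → ℕ
  | leaf => 0
  | node t₁ t₂ => t₁.size + t₂.size + 1

/-- The register function (Horton–Strahler number) of a binary tree; it is also the
label attached to the root.  Every node `v` of a tree is labeled by the register
function of the subtree rooted at `v`. -/
def reg : BTree → ℕ
  | leaf => 0
  | node t₁ t₂ => if t₁.reg = t₂.reg then t₁.reg + 1 else max t₁.reg t₂.reg

/-- The number of `r`-branches of a binary tree, i.e. the number of maximal chains of
nodes labeled `r`.  Each maximal chain is counted at its topmost node: a node labeled
`r` is the top of a chain iff it is the root or its parent is not labeled `r`. -/
def branches (r : ℕ) : BTree → ℕ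
  | leaf => if r = 0 then 1 else 0
  | node t₁ t₂ =>
      branches r t₁ + branches r t₂
        + (if (node t₁ t₂).reg = r then 1 else 0)
        - (if (node t₁ t₂).reg = r ∧ t₁.reg = r then 1 else 0)
        - (if (node t₁ t₂).reg = r ∧ t₂.reg = r then 1 else 0)

end BTree

/-- `E n r` is the expected number of `r`-branches in a uniformly random binary
tree of size `n` (all `catalan n` trees of size `n` being equally likely). -/
noncomputable def branchExpectation (n r : ℕ) : ℝ :=
  (∑' t : {t : BTree // t.size = n}, (BTree.branches r t.1 : ℝ)) / (catalan n : ℝ)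

/-- The total number of branches of a binary tree, i.e. the sum over all `r ≥ 0` of the
number of `r`-branches (all branches have label at most `reg t`, so the sum is finite). -/
def BTree.totalBranches (t : BTree) : ℕ :=
  ∑ r ∈ Finset.range (t.reg + 1), t.branches r

/-- `E n` is the expected total number of branches in a uniformly random binary tree of
size `n`. -/
noncomputable def totalBranchExpectation (n : ℕ) : ℝ :=
  (∑' t : {t : BTree // t.size = n}, (BTree.totalBranches t.1 : ℝ)) / (catalan n : ℝ)

/-- `zchoose n k` is the binomial coefficient `binom(n, k)` for an integer lower
index `k`, with the convention that it vanishes for negative `k`. -/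
def zchoose (n : ℕ) (k : ℤ) : ℕ :=
  if 0 ≤ k then n.choose k.toNat else 0


/-!
Write `T` for the generating function of binary trees by size and `u = X T²`, so that
`T = 1 + u` and `X (1 + u)² = u`. Decomposing at the root gives algebraic equations for the
generating functions `E_q` of trees with register `q` and `S_r` of `r`-branches; in terms of `u`
they are rational: `E_q (1 - u^(2^(q+1))) = (1 - u²) u^(2^q - 1)` and
`S_r (1 - u^(2^r))² = (1 - u²) u^(2^r - 1)`. Expanding `(1 - v)⁻² = ∑ (j + 1) vʲ` and reading off
`[Xⁿ] uᵏ = binom(2n-1, n-k) - binom(2n-1, n-k-1)` gives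
`[Xⁿ] S_r = ∑_j (j + 1) Δ(n, (j + 1) 2^r)`, with `Δ(n, k)` the bracket of the theorem. Summing over
`r`, each `k` collects the weight `∑_{2^r ∣ k} k / 2^r = (2 - 2^(-v₂(k))) k`, and dividing by
`catalan n = binom(2n, n) / (n + 1)` gives the expectation.
-/

open Finset PowerSeries

theorem pow_two_pow_succ {M : Type*} [Monoid M] (x : M) (q : ℕ) :
    x ^ 2 ^ (q + 1) = (x ^ 2 ^ q) ^ 2 := by
  rw [← pow_mul, pow_succ]

theorem pow_two_pow_succ_sub_one {M : Type*} [Monoid M] (x : M) (q : ℕ) :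
    x ^ (2 ^ (q + 1) - 1) = x ^ (2 ^ q - 1) * x ^ 2 ^ q := by
  rw [← pow_add]
  congr 1
  have := Nat.one_le_two_pow (n := q)
  rw [pow_succ]
  omega

theorem pow_two_pow_sub_one_mul {M : Type*} [Monoid M] (x : M) (q : ℕ) :
    x ^ (2 ^ q - 1) * x = x ^ 2 ^ q :=
  pow_sub_one_mul (pow_ne_zero q two_ne_zero) x

theorem one_sub_sq_mul_sum_range {R : Type*} [CommRing R] (v : R) (N : ℕ) :
    (1 - v) ^ 2 * ∑ j ∈ range (N + 1), ((j : R) + 1) * v ^ j =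
      1 - ((N : R) + 2) * v ^ (N + 1) + ((N : R) + 1) * v ^ (N + 2) := by
  induction N with
  | zero =>
    rw [sum_range_one]
    push_cast
    ring
  | succ N ih =>
    rw [sum_range_succ, mul_add, ih]
    push_cast
    ring

namespace PowerSeries

theorem coeff_mul_pow_eq_zero_of_lt {R : Type*} [CommRing R] {v : R⟦X⟧}
    (hv : constantCoeff v = 0) (f : R⟦X⟧) {n m : ℕ} (h : n < m) : coeff n (f * v ^ m) = 0 := by
  have hdvd : X ^ m ∣ f * v ^ m := (pow_dvd_pow_of_dvd (X_dvd_iff.mpr hv) m).mul_left f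
  exact X_pow_dvd_iff.mp hdvd n h

end PowerSeries

theorem zchoose_of_neg {N : ℕ} {k : ℤ} (h : k < 0) : zchoose N k = 0 := by
  simp [zchoose, h.not_ge]

theorem zchoose_natCast (N j : ℕ) : zchoose N j = N.choose j := by
  simp [zchoose]

theorem zchoose_succ (N : ℕ) (k : ℤ) : zchoose (N + 1) k = zchoose N k + zchoose N (k - 1) := by
  rcases lt_trichotomy k 0 with h | rfl | h
  · rw [zchoose_of_neg h, zchoose_of_neg h, zchoose_of_neg (by omega)]
  · simp [zchoose]
  · obtain ⟨j, rfl⟩ : ∃ j : ℕ, k = j + 1 := ⟨k.toNat - 1, by omega⟩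
    rw [add_sub_cancel_right, ← Nat.cast_succ, zchoose_natCast, zchoose_natCast,
      zchoose_natCast, Nat.choose_succ_succ', add_comm]

noncomputable def ballot (N : ℕ) (j : ℤ) : ℝ := zchoose N j - zchoose N (j - 1)

theorem ballot_of_neg {N : ℕ} {j : ℤ} (h : j < 0) : ballot N j = 0 := by
  simp [ballot, zchoose_of_neg h, zchoose_of_neg (by omega : j - 1 < 0)]

theorem ballot_zero (N : ℕ) : ballot N 0 = 1 := by
  simp [ballot, zchoose]

theorem ballot_succ (N : ℕ) (j : ℤ) : ballot (N + 1) j = ballot N j + ballot N (j - 1) := by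
  simp only [ballot, zchoose_succ, Nat.cast_add]
  ring

theorem ballot_two_mul_add_one (ν : ℕ) : ballot (2 * ν + 1) (ν + 1) = 0 := by
  rw [ballot, add_sub_cancel_right, ← Nat.cast_succ, zchoose_natCast, zchoose_natCast,
    Nat.choose_symm_half, sub_self]

noncomputable def binomSecondDiff (n k : ℕ) : ℝ :=
  (zchoose (2 * n) ((n : ℤ) + 1 - k) : ℝ) - 2 * (zchoose (2 * n) ((n : ℤ) - k) : ℝ)
    + (zchoose (2 * n) ((n : ℤ) - 1 - k) : ℝ)

theorem binomSecondDiff_eq_zero {n k : ℕ} (h : n + 1 < k) : binomSecondDiff n k = 0 := by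
  simp [binomSecondDiff, zchoose_of_neg (by omega : (n : ℤ) + 1 - k < 0),
    zchoose_of_neg (by omega : (n : ℤ) - k < 0), zchoose_of_neg (by omega : (n : ℤ) - 1 - k < 0)]

theorem binomSecondDiff_eq_ballot_sub {n k : ℕ} (hk : 1 ≤ k) :
    binomSecondDiff n k =
      ballot (2 * n - 1) (n - (k - 1 : ℕ)) - ballot (2 * n - 1) (n - (k + 1 : ℕ)) := by
  rw [binomSecondDiff, show (n : ℤ) + 1 - k = n - k + 1 by ring,
    show (n : ℤ) - 1 - k = n - k - 1 by ring, show (n : ℤ) - (k - 1 : ℕ) = n - k + 1 by omega,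
    show (n : ℤ) - (k + 1 : ℕ) = n - k - 1 by omega]
  have hj : (n : ℤ) - k < n := by omega
  generalize (n : ℤ) - k = j at hj ⊢
  rcases n.eq_zero_or_pos with rfl | hn
  · simp only [ballot, Nat.mul_zero, Nat.zero_sub, add_sub_cancel_right,
      zchoose_of_neg (by omega : j < 0),
      zchoose_of_neg (by omega : j - 1 < 0), zchoose_of_neg (by omega : j - 1 - 1 < 0)]
    ring
  · obtain ⟨M, hM⟩ : ∃ M, 2 * n = M + 1 := ⟨2 * n - 1, by omega⟩
    rw [hM, add_tsub_cancel_right]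
    simp only [ballot, zchoose_succ, add_sub_cancel_right, Nat.cast_add]
    ring

theorem sum_range_mul_eq_sum_Icc_ite_dvd {n d : ℕ} (hd : 0 < d) (g : ℕ → ℝ)
    (hg : ∀ k, n + 1 < k → g k = 0) :
    ∑ j ∈ range (n + 1), ((j : ℝ) + 1) * g ((j + 1) * d) =
      ∑ k ∈ Icc 1 (n + 1), (if d ∣ k then ((k / d : ℕ) : ℝ) else 0) * g k := by
  have hle : ∀ j, g ((j + 1) * d) ≠ 0 → (j + 1) * d ≤ n + 1 := fun j hj =>
    not_lt.mp fun h => hj (hg _ h)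
  refine sum_bij_ne_zero (fun j _ _ => (j + 1) * d) (fun j _ hj => ?_)
    (fun j₁ _ _ j₂ _ _ h => by simpa [hd.ne'] using h) (fun k hk hgk => ?_) (fun j _ _ => ?_)
  · have := hle j (right_ne_zero_of_mul hj)
    simp only [mem_Icc]
    constructor <;> nlinarith
  · have hdk : d ∣ k := by by_contra h; simp [h] at hgk
    obtain ⟨m, rfl⟩ := hdk
    obtain ⟨j, rfl⟩ := Nat.exists_eq_succ_of_ne_zero (by rintro rfl; simp at hk : m ≠ 0)
    refine ⟨j, ?_, ?_, mul_comm _ _⟩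
    · simp only [mem_range, mem_Icc] at hk ⊢
      nlinarith
    · simp only [dvd_mul_right, if_true, Nat.mul_div_cancel_left _ hd] at hgk
      rwa [mul_comm _ d, ← Nat.cast_succ]
  · simp [hd.ne']

theorem sum_range_ite_two_pow_dvd {k N : ℕ} (hk : k ≠ 0) (hN : padicValNat 2 k ≤ N) :
    ∑ r ∈ range (N + 1), (if 2 ^ r ∣ k then ((k / 2 ^ r : ℕ) : ℝ) else 0) =
      (2 - (2 : ℝ) ^ (-(padicValNat 2 k : ℤ))) * k := by
  set v := padicValNat 2 k
  have hdvd : ∀ r, 2 ^ r ∣ k ↔ r ≤ v := fun r => padicValNat_dvd_iff_le hk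
  rw [← sum_filter, show (range (N + 1)).filter (2 ^ · ∣ k) = range (v + 1) by
    ext r; simp only [mem_filter, mem_range, hdvd]; omega]
  have hterm : ∀ r ∈ range (v + 1), ((k / 2 ^ r : ℕ) : ℝ) = k * (2⁻¹) ^ r := fun r hr => by
    rw [Nat.cast_div ((hdvd r).mpr (by simpa [Nat.lt_succ_iff] using hr)) (by positivity)]
    simp [div_eq_mul_inv]
  rw [sum_congr rfl hterm, ← mul_sum, geom_sum_eq (by norm_num), zpow_neg, zpow_natCast,
    inv_pow, pow_succ]
  field_simp
  ring

theorem padicValNat_two_le_of_le {k n : ℕ} (hk : k ≠ 0) (hkn : k ≤ n + 1) :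
    padicValNat 2 k ≤ n := by
  have h₁ : 2 ^ padicValNat 2 k ≤ k := Nat.le_of_dvd (Nat.pos_of_ne_zero hk) pow_padicValNat_dvd
  have h₂ : n + 1 < 2 ^ (n + 1) := Nat.lt_two_pow_self
  have h₃ : 2 ^ padicValNat 2 k < 2 ^ (n + 1) := by omega
  exact Nat.lt_succ_iff.mp ((Nat.pow_lt_pow_iff_right (by norm_num)).mp h₃)

namespace BTree

@[simps]
def nodeEmbedding : BTree × BTree ↪ BTree :=
  ⟨fun p => node p.1 p.2, fun ⟨_, _⟩ ⟨_, _⟩ h => by simpa using h⟩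

def ofSize : ℕ → Finset BTree
  | 0 => {leaf}
  | n + 1 => (antidiagonal n).attach.biUnion fun p =>
      (ofSize p.1.1 ×ˢ ofSize p.1.2).map nodeEmbedding
  decreasing_by
    · have := HasAntidiagonal.antidiagonal.fst_le p.2; omega
    · have := HasAntidiagonal.antidiagonal.snd_le p.2; omega

theorem ofSize_succ (n : ℕ) :
    ofSize (n + 1) =
      (antidiagonal n).biUnion fun p => (ofSize p.1 ×ˢ ofSize p.2).map nodeEmbedding := by
  rw [ofSize]
  ext
  simp

@[simp]
theorem mem_ofSize {t : BTree} {n : ℕ} : t ∈ ofSize n ↔ t.size = n := by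
  induction t generalizing n <;> cases n <;>
    simp [ofSize, ofSize_succ, size, *]

theorem sum_ofSize_succ {M : Type*} [AddCommMonoid M] (n : ℕ) (f : BTree → M) :
    ∑ t ∈ ofSize (n + 1), f t =
      ∑ p ∈ antidiagonal n, ∑ t₁ ∈ ofSize p.1, ∑ t₂ ∈ ofSize p.2, f (node t₁ t₂) := by
  rw [ofSize_succ, sum_biUnion]
  · refine sum_congr rfl fun p _ => ?_
    rw [sum_map, sum_product]
    rfl
  · intro p _ q _ hpq
    simp only [Function.onFun, disjoint_left, mem_map, mem_product, mem_ofSize,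
      nodeEmbedding_apply]
    rintro _ ⟨⟨t₁, t₂⟩, ⟨hp₁, hp₂⟩, rfl⟩ ⟨⟨s₁, s₂⟩, ⟨hq₁, hq₂⟩, h⟩
    cases h
    exact hpq (Prod.ext (hp₁.symm.trans hq₁) (hp₂.symm.trans hq₂))

theorem tsum_size_eq_sum_ofSize (n : ℕ) (f : BTree → ℝ) :
    ∑' t : {t : BTree // t.size = n}, f t = ∑ t ∈ ofSize n, f t := by
  rw [← Finset.tsum_subtype]
  exact (Equiv.subtypeEquivRight fun t => mem_ofSize.symm).tsum_eq (fun t => f t.1)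

theorem reg_node_ne_zero (t₁ t₂ : BTree) : (node t₁ t₂).reg ≠ 0 := by
  simp only [reg]
  split_ifs <;> omega

theorem reg_le_size (t : BTree) : t.reg ≤ t.size := by
  induction t with
  | leaf => simp [reg, size]
  | node t₁ t₂ ih₁ ih₂ =>
    simp only [reg, size]
    split_ifs <;> omega

theorem one_le_branches_reg (t : BTree) : 1 ≤ t.branches t.reg := by
  induction t with
  | leaf => simp [branches, reg]
  | node t₁ t₂ ih₁ ih₂ =>
    simp only [branches, reg, max_def]
    split_ifs <;> omega

theorem branches_node (t₁ t₂ : BTree) (r : ℕ) :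
    (node t₁ t₂).branches r =
      t₁.branches r + t₂.branches r + if t₁.reg = t₂.reg ∧ r = t₁.reg + 1 then 1 else 0 := by
  have h₁ := one_le_branches_reg t₁
  have h₂ := one_le_branches_reg t₂
  simp only [branches, reg, max_def]
  split_ifs <;> subst_vars <;> omega

theorem branches_eq_zero_of_reg_lt {t : BTree} {r : ℕ} (h : t.reg < r) : t.branches r = 0 := by
  induction t with
  | leaf => simp only [reg] at h; simp [branches, h.ne']
  | node t₁ t₂ ih₁ ih₂ =>
    simp only [reg] at h
    rw [branches_node]
    split_ifs at h ⊢ <;> grind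

theorem totalBranches_eq_sum_range {t : BTree} {N : ℕ} (h : t.reg ≤ N) :
    t.totalBranches = ∑ r ∈ range (N + 1), t.branches r :=
  sum_subset (range_subset_range.2 (by omega)) fun _ _ hr =>
    branches_eq_zero_of_reg_lt (by simp at hr; omega)

noncomputable def genFun (f : BTree → ℝ) : ℝ⟦X⟧ :=
  PowerSeries.mk fun n => ∑ t ∈ ofSize n, f t

theorem coeff_genFun (f : BTree → ℝ) (n : ℕ) : coeff n (genFun f) = ∑ t ∈ ofSize n, f t :=
  coeff_mk _ _

theorem genFun_add (f g : BTree → ℝ) : genFun (f + g) = genFun f + genFun g := by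
  ext n
  simp [coeff_genFun, sum_add_distrib]

theorem genFun_eq_of_node {f : BTree → ℝ} {ι : Type*} (s : Finset ι) (g h : ι → BTree → ℝ)
    (hf : ∀ t₁ t₂, f (node t₁ t₂) = ∑ i ∈ s, g i t₁ * h i t₂) :
    genFun f = C (f leaf) + X * ∑ i ∈ s, genFun (g i) * genFun (h i) := by
  ext (_ | n)
  · simp [coeff_genFun, ofSize]
  · rw [map_add, coeff_C, if_neg n.succ_ne_zero, zero_add, coeff_succ_X_mul, map_sum,
      coeff_genFun, sum_ofSize_succ]
    simp only [hf, coeff_mul, coeff_genFun, sum_mul_sum]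
    rw [sum_comm]
    refine sum_congr rfl fun p _ => ?_
    simp only [sum_comm (s := s)]

noncomputable def treeSeries : ℝ⟦X⟧ := genFun fun _ => 1

noncomputable def regSeries (q : ℕ) : ℝ⟦X⟧ := genFun fun t => if t.reg = q then 1 else 0

noncomputable def regLeSeries (q : ℕ) : ℝ⟦X⟧ := genFun fun t => if t.reg ≤ q then 1 else 0

noncomputable def branchSeries (r : ℕ) : ℝ⟦X⟧ := genFun fun t => t.branches r

theorem treeSeries_eq : treeSeries = 1 + X * treeSeries ^ 2 := by
  conv_lhs => rw [treeSeries, genFun_eq_of_node (univ : Finset Unit) (fun _ _ => 1)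
    (fun _ _ => 1) (by simp)]
  simp [treeSeries, sq]

theorem regSeries_zero : regSeries 0 = 1 := by
  rw [regSeries, genFun_eq_of_node (∅ : Finset Unit) (fun _ _ => 0) (fun _ _ => 0)
    (by simp [reg_node_ne_zero])]
  simp [reg]

theorem regLeSeries_zero : regLeSeries 0 = 1 := by
  simp only [regLeSeries, nonpos_iff_eq_zero]
  exact regSeries_zero

theorem regLeSeries_succ (q : ℕ) : regLeSeries (q + 1) = regLeSeries q + regSeries (q + 1) := by
  rw [regLeSeries, regLeSeries, regSeries, ← genFun_add]
  congr 1
  ext t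
  simp only [Pi.add_apply]
  split_ifs <;> first | omega | norm_num

theorem ite_reg_node_eq_succ (t₁ t₂ : BTree) (q : ℕ) :
    (if (node t₁ t₂).reg = q + 1 then 1 else 0 : ℝ) =
      (if t₁.reg = q + 1 then 1 else 0) * (if t₂.reg ≤ q then 1 else 0)
      + (if t₁.reg ≤ q then 1 else 0) * (if t₂.reg = q + 1 then 1 else 0)
      + (if t₁.reg = q then 1 else 0) * (if t₂.reg = q then 1 else 0) := by
  simp only [reg, max_def]
  split_ifs <;> first | omega | norm_num

theorem regSeries_succ (q : ℕ) :
    regSeries (q + 1) = X * (2 * regSeries (q + 1) * regLeSeries q + regSeries q ^ 2) := by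
  conv_lhs => rw [regSeries, genFun_eq_of_node (univ : Finset (Fin 3))
    ![fun t => if t.reg = q + 1 then 1 else 0, fun t => if t.reg ≤ q then 1 else 0,
      fun t => if t.reg = q then 1 else 0]
    ![fun t => if t.reg ≤ q then 1 else 0, fun t => if t.reg = q + 1 then 1 else 0,
      fun t => if t.reg = q then 1 else 0]
    (by simpa [Fin.sum_univ_three] using ite_reg_node_eq_succ · · q)]
  simp only [Fin.sum_univ_three, Matrix.cons_val_zero, Matrix.cons_val_one, Matrix.cons_val_two,
    Matrix.head_cons, Matrix.tail_cons, reg, (Nat.succ_ne_zero q).symm, if_false, map_zero,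
    zero_add, regSeries, regLeSeries]
  ring

theorem branchSeries_zero : branchSeries 0 = 1 + 2 * X * treeSeries * branchSeries 0 := by
  conv_lhs => rw [branchSeries, genFun_eq_of_node (univ : Finset (Fin 2))
    ![fun _ => 1, fun t => (t.branches 0 : ℝ)] ![fun t => (t.branches 0 : ℝ), fun _ => 1]
    (by simp [Fin.sum_univ_two, branches_node, add_comm])]
  simp only [Fin.sum_univ_two, Matrix.cons_val_zero, Matrix.cons_val_one, branches, if_true,
    Nat.cast_one, map_one, branchSeries, treeSeries]
  ring

theorem branchSeries_succ (r : ℕ) :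
    branchSeries (r + 1) = X * (2 * treeSeries * branchSeries (r + 1) + regSeries r ^ 2) := by
  conv_lhs => rw [branchSeries, genFun_eq_of_node (univ : Finset (Fin 3))
    ![fun _ => 1, fun t => (t.branches (r + 1) : ℝ), fun t => if t.reg = r then 1 else 0]
    ![fun t => (t.branches (r + 1) : ℝ), fun _ => 1, fun t => if t.reg = r then 1 else 0]
    fun t₁ t₂ => by
      simp only [Fin.sum_univ_three, Matrix.cons_val_zero, Matrix.cons_val_one,
        Matrix.cons_val_two, Matrix.head_cons, Matrix.tail_cons, branches_node]
      split_ifs <;> first | omega | (push_cast; ring)]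
  simp only [Fin.sum_univ_three, Matrix.cons_val_zero, Matrix.cons_val_one,
    Matrix.cons_val_two, Matrix.head_cons, Matrix.tail_cons, branches,
    if_neg (Nat.succ_ne_zero r), Nat.cast_zero, map_zero, zero_add, branchSeries, treeSeries,
    regSeries]
  ring

noncomputable def uSeries : ℝ⟦X⟧ := X * treeSeries ^ 2

theorem treeSeries_eq_one_add_uSeries : treeSeries = 1 + uSeries := treeSeries_eq

theorem X_mul_one_add_uSeries_sq : X * (1 + uSeries) ^ 2 = uSeries := by
  rw [← treeSeries_eq_one_add_uSeries, uSeries]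

theorem constantCoeff_uSeries : constantCoeff uSeries = 0 := by
  simp [uSeries]

theorem one_sub_uSeries_sq_ne_zero : (1 : ℝ⟦X⟧) - uSeries ^ 2 ≠ 0 := fun h => by
  simpa [constantCoeff_uSeries] using congrArg constantCoeff h

/- Each induction step multiplies the functional equation by `(1 + u)² (1 - u^(2^(q+1)))²`,
replaces `X (1 + u)²` by `u` and cancels the factor `1 - u²`. -/
theorem regSeries_mul_eq_and_regLeSeries_mul_eq (q : ℕ) :
    regSeries q * (1 - uSeries ^ 2 ^ (q + 1)) = (1 - uSeries ^ 2) * uSeries ^ (2 ^ q - 1) ∧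
    regLeSeries q * (1 - uSeries ^ 2 ^ (q + 1)) =
      (1 + uSeries) * (1 - uSeries ^ 2 ^ (q + 1))
        - (1 - uSeries ^ 2) * uSeries ^ (2 ^ (q + 1) - 1) := by
  induction q with
  | zero =>
    rw [regSeries_zero, regLeSeries_zero]
    refine ⟨by norm_num, by norm_num; ring⟩
  | succ q ih =>
    have hE := regSeries_succ q
    have hL := regLeSeries_succ q
    have hX := X_mul_one_add_uSeries_sq
    have hab := pow_two_pow_sub_one_mul uSeries q
    simp only [pow_two_pow_succ, pow_two_pow_succ_sub_one] at ih ⊢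
    set a := uSeries ^ 2 ^ q
    set b := uSeries ^ (2 ^ q - 1)
    set u := uSeries
    obtain ⟨hP, hB⟩ := ih
    set E' := regSeries (q + 1)
    have hE' : E' * (1 - (a ^ 2) ^ 2) = (1 - u ^ 2) * (b * a) := by
      refine mul_left_cancel₀ one_sub_uSeries_sq_ne_zero ?_
      linear_combination (1 + u) ^ 2 * (1 - a ^ 2) ^ 2 * hE
        + (2 * E' * (1 - a ^ 2) * (regLeSeries q * (1 - a ^ 2))
          + (regSeries q * (1 - a ^ 2)) ^ 2) * hX
        + 2 * u * E' * (1 - a ^ 2) * hB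
        + u * (regSeries q * (1 - a ^ 2) + (1 - u ^ 2) * b) * hP
        - (2 * (1 - u ^ 2) * E' * (1 - a ^ 2) * a - (1 - u ^ 2) ^ 2 * b) * hab
    refine ⟨hE', ?_⟩
    linear_combination (1 - (a ^ 2) ^ 2) * hL + (1 + a ^ 2) * hB + hE'

theorem branchSeries_mul_eq (r : ℕ) :
    branchSeries r * (1 - uSeries ^ 2 ^ r) ^ 2 = (1 - uSeries ^ 2) * uSeries ^ (2 ^ r - 1) := by
  cases r with
  | zero =>
    have hS := branchSeries_zero
    rw [treeSeries_eq_one_add_uSeries] at hS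
    norm_num
    linear_combination (1 - uSeries) * (1 + uSeries) * hS
      + 2 * branchSeries 0 * (1 - uSeries) * X_mul_one_add_uSeries_sq
  | succ r =>
    have hS := branchSeries_succ r
    rw [treeSeries_eq_one_add_uSeries] at hS
    have hX := X_mul_one_add_uSeries_sq
    have hab := pow_two_pow_sub_one_mul uSeries r
    have hP := (regSeries_mul_eq_and_regLeSeries_mul_eq r).1
    rw [pow_two_pow_succ] at hP
    rw [pow_two_pow_succ, pow_two_pow_succ_sub_one]
    set a := uSeries ^ 2 ^ r
    set b := uSeries ^ (2 ^ r - 1)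
    set u := uSeries
    set S' := branchSeries (r + 1)
    refine mul_left_cancel₀ one_sub_uSeries_sq_ne_zero ?_
    linear_combination (1 + u) ^ 2 * (1 - a ^ 2) ^ 2 * hS
      + (2 * (1 + u) * S' * (1 - a ^ 2) ^ 2 + (regSeries r * (1 - a ^ 2)) ^ 2) * hX
      + u * (regSeries r * (1 - a ^ 2) + (1 - u ^ 2) * b) * hP
      + (1 - u ^ 2) ^ 2 * b * hab

theorem treeSeries_pow_succ (m : ℕ) :
    treeSeries ^ (m + 1) = treeSeries ^ m + X * treeSeries ^ (m + 2) :=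
  calc treeSeries ^ (m + 1) = treeSeries ^ m * (1 + X * treeSeries ^ 2) := by
        rw [← treeSeries_eq, pow_succ]
    _ = treeSeries ^ m + X * treeSeries ^ (m + 2) := by ring

theorem coeff_treeSeries_pow (ν m : ℕ) :
    coeff ν (treeSeries ^ (m + 1)) = ballot (2 * ν + m) ν := by
  induction ν generalizing m with
  | zero =>
    simp [coeff_zero_eq_constantCoeff, ballot_zero, treeSeries, genFun, ofSize]
  | succ ν ihν =>
    induction m with
    | zero =>
      rw [treeSeries_pow_succ, pow_zero, map_add, coeff_one, if_neg ν.succ_ne_zero, zero_add,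
        coeff_succ_X_mul, ihν, show 2 * (ν + 1) + 0 = 2 * ν + 1 + 1 by ring,
        ballot_succ (2 * ν + 1)]
      push_cast
      rw [ballot_two_mul_add_one, add_sub_cancel_right, zero_add]
    | succ m ihm =>
      rw [treeSeries_pow_succ, map_add, coeff_succ_X_mul, ihm, ihν,
        show 2 * (ν + 1) + (m + 1) = 2 * ν + (m + 2) + 1 by ring, ballot_succ (2 * ν + (m + 2))]
      push_cast
      rw [add_sub_cancel_right, show 2 * (ν + 1) + m = 2 * ν + (m + 2) by ring]

theorem coeff_uSeries_pow (n k : ℕ) : coeff n (uSeries ^ k) = ballot (2 * n - 1) (n - k) := by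
  rw [uSeries, mul_pow, ← pow_mul, coeff_X_pow_mul']
  split_ifs with hk
  · obtain ⟨d, rfl⟩ := Nat.exists_eq_add_of_le hk
    rcases k with _ | k
    · rcases d with _ | d
      · simp [ballot_zero]
      · rw [Nat.mul_zero, pow_zero, coeff_one, if_neg (by omega),
          show 2 * (0 + (d + 1)) - 1 = 2 * d + 1 by omega]
        push_cast
        rw [zero_add, sub_zero, ballot_two_mul_add_one]
    · rw [add_tsub_cancel_left, show 2 * (k + 1) = (2 * k + 1) + 1 by ring, coeff_treeSeries_pow]
      congr 1
      · omega
      · push_cast; ring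
  · rw [ballot_of_neg (by omega)]

theorem coeff_one_sub_sq_mul_uSeries_pow (n : ℕ) {k : ℕ} (hk : 1 ≤ k) :
    coeff n ((1 - uSeries ^ 2) * uSeries ^ (k - 1)) = binomSecondDiff n k := by
  have hsplit : (1 - uSeries ^ 2) * uSeries ^ (k - 1) = uSeries ^ (k - 1) - uSeries ^ (k + 1) := by
    rw [show k + 1 = k - 1 + 2 by omega, pow_add]
    ring
  rw [hsplit, map_sub, coeff_uSeries_pow, coeff_uSeries_pow, binomSecondDiff_eq_ballot_sub hk]

theorem coeff_branchSeries (r n : ℕ) :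
    coeff n (branchSeries r) =
      ∑ j ∈ range (n + 1), ((j : ℝ) + 1) * binomSecondDiff n ((j + 1) * 2 ^ r) := by
  set v := uSeries ^ 2 ^ r
  have hv : constantCoeff v = 0 := by simp [v, constantCoeff_uSeries]
  -- `(1 - v)⁻² = ∑ (j + 1) vʲ` truncated at order `n`: the remainder is a multiple of `v ^ (n + 1)`
  have hsplit : branchSeries r =
      ∑ j ∈ range (n + 1), ((j : ℝ⟦X⟧) + 1) * ((1 - uSeries ^ 2) * uSeries ^ ((j + 1) * 2 ^ r - 1))
        + branchSeries r * ((n + 2) - (n + 1) * v) * v ^ (n + 1) := by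
    have hexp : ∀ j : ℕ, uSeries ^ (2 ^ r - 1) * v ^ j = uSeries ^ ((j + 1) * 2 ^ r - 1) := by
      intro j
      rw [← pow_mul, ← pow_add]
      congr 1
      have := Nat.one_le_two_pow (n := r)
      rw [add_mul, one_mul, mul_comm]
      omega
    calc branchSeries r
        = branchSeries r * ((1 - v) ^ 2 * ∑ j ∈ range (n + 1), ((j : ℝ⟦X⟧) + 1) * v ^ j)
          + branchSeries r * ((n + 2) - (n + 1) * v) * v ^ (n + 1) := by
          rw [one_sub_sq_mul_sum_range]; ring
      _ = _ := by
          rw [← mul_assoc, branchSeries_mul_eq, mul_sum]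
          simp only [← hexp]
          congr 1
          exact sum_congr rfl fun j _ => by ring
  rw [hsplit, map_add, coeff_mul_pow_eq_zero_of_lt hv _ n.lt_succ_self, add_zero, map_sum]
  refine sum_congr rfl fun j _ => ?_
  rw [show ((j : ℝ⟦X⟧) + 1) = C ((j : ℝ) + 1) by simp, coeff_C_mul,
    coeff_one_sub_sq_mul_uSeries_pow n (Nat.one_le_iff_ne_zero.mpr (by positivity))]

theorem sum_totalBranches_ofSize_eq_sum_coeff (n : ℕ) :
    ∑ t ∈ ofSize n, (t.totalBranches : ℝ) = ∑ r ∈ range (n + 1), coeff n (branchSeries r) := by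
  have hsum : ∀ t ∈ ofSize n, (t.totalBranches : ℝ) = ∑ r ∈ range (n + 1), (t.branches r : ℝ) :=
    fun t ht => by
      rw [totalBranches_eq_sum_range ((reg_le_size t).trans (mem_ofSize.mp ht).le), Nat.cast_sum]
  rw [sum_congr rfl hsum, sum_comm]
  simp only [branchSeries, coeff_genFun]

theorem sum_totalBranches_ofSize (n : ℕ) :
    ∑ t ∈ ofSize n, (t.totalBranches : ℝ) =
      ∑ k ∈ Icc 1 (n + 1),
        (2 - (2 : ℝ) ^ (-(padicValNat 2 k : ℤ))) * k * binomSecondDiff n k := by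
  simp only [sum_totalBranches_ofSize_eq_sum_coeff, coeff_branchSeries,
    sum_range_mul_eq_sum_Icc_ite_dvd (pow_pos two_pos _) (binomSecondDiff n)
      fun _ => binomSecondDiff_eq_zero]
  rw [sum_comm]
  refine sum_congr rfl fun k hk => ?_
  have hk' := mem_Icc.mp hk
  rw [← sum_mul, sum_range_ite_two_pow_dvd (by omega) (padicValNat_two_le_of_le (by omega) hk'.2)]

end BTree

theorem totalBranchExpectation_explicit_general (n : ℕ) :
    totalBranchExpectation n =
      ((n : ℝ) + 1) / (Nat.choose (2 * n) n : ℝ) *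
        ∑ k ∈ Finset.Icc 1 (n + 1),
          (2 - (2 : ℝ) ^ (-(padicValNat 2 k : ℤ))) * (k : ℝ) *
            ((zchoose (2 * n) ((n : ℤ) + 1 - k) : ℝ)
              - 2 * (zchoose (2 * n) ((n : ℤ) - k) : ℝ)
              + (zchoose (2 * n) ((n : ℤ) - 1 - k) : ℝ)) := by
  have hcatalan : ((n : ℝ) + 1) * catalan n = (2 * n).choose n := by
    exact_mod_cast succ_mul_catalan_eq_centralBinom n
  rw [totalBranchExpectation, BTree.tsum_size_eq_sum_ofSize n fun t => (t.totalBranches : ℝ),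
    BTree.sum_totalBranches_ofSize, ← hcatalan, div_mul_cancel_left₀ (by positivity),
    div_eq_inv_mul]
  rfl

/-- Explicit formula for the expected total number of branches in binary trees of size
`n ≥ 1`:
`E_n = ((n+1)/binom(2n,n)) · Σ_{k=1}^{n+1} (2 - 2^{-v₂(k)})·k·[binom(2n, n+1-k)
  - 2·binom(2n, n-k) + binom(2n, n-1-k)]`,
where `v₂(k)` is the 2-adic valuation of `k`. -/
theorem totalBranchExpectation_explicit (n : ℕ) (hn : 1 ≤ n) :
    totalBranchExpectation n =
      ((n : ℝ) + 1) / (Nat.choose (2 * n) n : ℝ) *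
        ∑ k ∈ Finset.Icc 1 (n + 1),
          (2 - (2 : ℝ) ^ (-(padicValNat 2 k : ℤ))) * (k : ℝ) *
            ((zchoose (2 * n) ((n : ℤ) + 1 - k) : ℝ)
              - 2 * (zchoose (2 * n) ((n : ℤ) - k) : ℝ)
              + (zchoose (2 * n) ((n : ℤ) - 1 - k) : ℝ)) :=
  totalBranchExpectation_explicit_general n
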